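/- Assume ητ ≤ 1 and define, for each agent i, the auxiliary sequence ξ_i^(0)(a) = (Σ_{a'∈𝒜} exp(r_i^(0)(a')/τ)) · π_i^(0)(a) and ξ_i^(t+1)(a) = ξ_i^(t)(a)^{1−ητ} · exp(η r_i^(t)(a)). Then for every t ≥ 0, max_{a∈𝒜} |log ξ_i^(t+1)(a) − r_i^(t+1)(a)/τ| ≤ (1−ητ)^{t+1} · max_{a∈𝒜} |log ξ_i^(0)(a) − r_i^(0)(a)/τ| + τ^{−1} Σ_{s=0}^{t} (1−ητ)^{t−s} · √(J(π^(s+1), π^(s))). -/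

import Mathlib

open Finset

noncomputable section

/-- A probability distribution on a finite action set. -/
def IsDist {A : Type*} [Fintype A] (p : A → ℝ) : Prop :=
  (∀ a, 0 ≤ p a) ∧ ∑ a, p a = 1

/-- Shannon entropy of a distribution. -/
def entropy {A : Type*} [Fintype A] (p : A → ℝ) : ℝ :=
  -∑ a, p a * Real.log (p a)

/-- Kullback-Leibler divergence on a finite set. -/
def KLdiv {A : Type*} [Fintype A] (p q : A → ℝ) : ℝ :=
  ∑ a, p a * (Real.log (p a) - Real.log (q a))

/-- Jeffrey divergence: the symmetrized KL divergence. -/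
def Jdiv {A : Type*} [Fintype A] (p q : A → ℝ) : ℝ :=
  KLdiv p q + KLdiv q p

/-- Joint product distribution induced by a product policy. -/
def jointPmf {N : ℕ} {A : Type*} [Fintype A] (π : Fin N → A → ℝ) :
    (Fin N → A) → ℝ :=
  fun a => ∏ i, π i (a i)

/-- Expectation of `f` under the product policy `π`. -/
def expVal {N : ℕ} {A : Type*} [Fintype A] (π : Fin N → A → ℝ)
    (f : (Fin N → A) → ℝ) : ℝ :=
  ∑ a, jointPmf π a * f a

/-- Point mass at action `a`. -/
def pmfOf {A : Type*} [DecidableEq A] (a : A) : A → ℝ :=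
  fun b => if b = a then 1 else 0

/-- Marginalized utility `r_i^π(a) = E_{a_{-i} ∼ π_{-i}}[u_i(a, a_{-i})]`. -/
def margU {N : ℕ} {A : Type*} [Fintype A] [DecidableEq A]
    (u : Fin N → (Fin N → A) → ℝ) (π : Fin N → A → ℝ) (i : Fin N) (a : A) : ℝ :=
  expVal (Function.update π i (pmfOf a)) (u i)

/-- Entropy-regularized utility `u_{i,τ}(π) = u_i(π) + τ H(π_i)`. -/
def uReg {N : ℕ} {A : Type*} [Fintype A] (u : Fin N → (Fin N → A) → ℝ) (τ : ℝ)
    (i : Fin N) (π : Fin N → A → ℝ) : ℝ :=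
  expVal π (u i) + τ * entropy (π i)

/-- `QRE-gap_τ(π)`. -/
def QREgap {N : ℕ} {A : Type*} [Fintype A] [DecidableEq A]
    (u : Fin N → (Fin N → A) → ℝ) (τ : ℝ) (π : Fin N → A → ℝ) : ℝ :=
  sSup {x | ∃ (i : Fin N) (p : A → ℝ), IsDist p ∧
    x = uReg u τ i (Function.update π i p) - uReg u τ i π}

/-- `NE-gap(π)`. -/
def NEgap {N : ℕ} {A : Type*} [Fintype A] [DecidableEq A]
    (u : Fin N → (Fin N → A) → ℝ) (π : Fin N → A → ℝ) : ℝ :=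
  sSup {x | ∃ (i : Fin N) (p : A → ℝ), IsDist p ∧
    x = expVal (Function.update π i p) (u i) - expVal π (u i)}

/-- Entropy-regularized potential `Φ_τ(π) = Φ(π) + τ ∑_i H(π_i)`. -/
def regPot {N : ℕ} {A : Type*} [Fintype A] (Φ : (Fin N → A) → ℝ) (τ : ℝ)
    (π : Fin N → A → ℝ) : ℝ :=
  expVal π Φ + τ * ∑ i, entropy (π i)

/-- `Φ` is a potential function for the game with utilities `u`. -/
def IsPotential {N : ℕ} {A : Type*} [Fintype A] [DecidableEq A]
    (u : Fin N → (Fin N → A) → ℝ) (Φ : (Fin N → A) → ℝ) : Prop :=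
  ∀ (i : Fin N) (a : Fin N → A) (a' : A),
    u i a - u i (Function.update a i a') = Φ a - Φ (Function.update a i a')

/-- The independent entropy-regularized NPG update rule. -/
def NPGstep {N : ℕ} {A : Type*} [Fintype A] [DecidableEq A]
    (u : Fin N → (Fin N → A) → ℝ) (τ η : ℝ) (π : ℕ → Fin N → A → ℝ) : Prop :=
  ∀ t i a, π (t+1) i a =
    π t i a ^ (1 - η * τ) * Real.exp (η * margU u (π t) i a) /
      ∑ a', π t i a' ^ (1 - η * τ) * Real.exp (η * margU u (π t) i a')

/-- Best-response policy `π_i^⋆(a) ∝ exp(r_i^π(a)/τ)`. -/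
def bestResp {N : ℕ} {A : Type*} [Fintype A] [DecidableEq A]
    (u : Fin N → (Fin N → A) → ℝ) (τ : ℝ) (π : Fin N → A → ℝ) (i : Fin N) :
    A → ℝ :=
  fun a => Real.exp (margU u π i a / τ) / ∑ a', Real.exp (margU u π i a' / τ)

/-!
Taking logarithms, `log ξ^(t+1) - r^(t+1)/τ = (1-ητ) (log ξ^t - r^t/τ) + (r^t - r^(t+1))/τ`, so the
error contracts by the factor `1-ητ` at each step, up to the drift of the marginalized utility.
That drift is the difference of the expectations of a `[0,1]`-valued function under two product
policies `P`, `Q`, hence at most half their `ℓ¹` distance. Cauchy–Schwarz with weights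
`max (P b) (Q b)` (whose total is at most `2`) together with the pointwise bound
`(x-y)²/max x y ≤ (x-y)(log x - log y)` bounds the squared `ℓ¹` distance by `2 J(P, Q)`.
Unrolling the resulting scalar recursion gives the claim.
-/

section Divergence

variable {α : Type*} [Fintype α]

lemma Jdiv_eq_sum (P Q : α → ℝ) :
    Jdiv P Q = ∑ b, (P b - Q b) * (Real.log (P b) - Real.log (Q b)) := by
  rw [Jdiv, KLdiv, KLdiv, ← Finset.sum_add_distrib]
  exact Finset.sum_congr rfl fun b _ => by ring

lemma sq_sub_div_max_le_mul_log_sub {x y : ℝ} (hx : 0 < x) (hy : 0 < y) :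
    (x - y) ^ 2 / max x y ≤ (x - y) * (Real.log x - Real.log y) := by
  wlog hyx : y ≤ x generalizing x y
  · have := this hy hx (le_of_not_ge hyx)
    rw [max_comm]
    convert this using 1 <;> ring
  have hlog : (x - y) / x ≤ Real.log x - Real.log y := by
    have := Real.log_le_sub_one_of_pos (div_pos hy hx)
    rw [Real.log_div hy.ne' hx.ne'] at this
    rw [sub_div, div_self hx.ne']
    linarith
  rw [max_eq_left hyx, sq, mul_div_assoc]
  exact mul_le_mul_of_nonneg_left hlog (sub_nonneg.mpr hyx)

lemma sq_sum_abs_sub_le_two_mul_Jdiv {P Q : α → ℝ} (hP : ∀ b, 0 < P b) (hQ : ∀ b, 0 < Q b)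
    (hPs : ∑ b, P b = 1) (hQs : ∑ b, Q b = 1) :
    (∑ b, |P b - Q b|) ^ 2 ≤ 2 * Jdiv P Q := by
  have hmax : ∀ b ∈ Finset.univ, 0 < max (P b) (Q b) := fun b _ => lt_max_of_lt_left (hP b)
  have hmax_sum : ∑ b, max (P b) (Q b) ≤ 2 := calc
    ∑ b, max (P b) (Q b) ≤ ∑ b, (P b + Q b) :=
      Finset.sum_le_sum fun b _ => max_le_add_of_nonneg (hP b).le (hQ b).le
    _ = 2 := by rw [Finset.sum_add_distrib, hPs, hQs]; norm_num
  have titu := Finset.sq_sum_div_le_sum_sq_div Finset.univ (fun b => |P b - Q b|) hmax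
  simp only [sq_abs] at titu
  have hmax_pos : 0 < ∑ b, max (P b) (Q b) := by
    linarith [Finset.sum_le_sum fun b (_ : b ∈ Finset.univ) => le_max_left (P b) (Q b)]
  rw [div_le_iff₀ hmax_pos] at titu
  calc (∑ b, |P b - Q b|) ^ 2
      ≤ (∑ b, (P b - Q b) ^ 2 / max (P b) (Q b)) * ∑ b, max (P b) (Q b) := titu
    _ ≤ Jdiv P Q * 2 := by
      have hJ : ∑ b, (P b - Q b) ^ 2 / max (P b) (Q b) ≤ Jdiv P Q := by
        rw [Jdiv_eq_sum]
        exact Finset.sum_le_sum fun b _ => sq_sub_div_max_le_mul_log_sub (hP b) (hQ b)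
      have hJ0 : 0 ≤ ∑ b, (P b - Q b) ^ 2 / max (P b) (Q b) :=
        Finset.sum_nonneg fun b hb => div_nonneg (sq_nonneg _) (hmax b hb).le
      exact mul_le_mul hJ hmax_sum hmax_pos.le (hJ0.trans hJ)
    _ = 2 * Jdiv P Q := mul_comm _ _

lemma abs_sum_mul_sub_sum_mul_le_half_sum_abs_sub {P Q f : α → ℝ} (hPQ : ∑ b, P b = ∑ b, Q b)
    (hf : ∀ b, f b ∈ Set.Icc (0 : ℝ) 1) :
    |∑ b, P b * f b - ∑ b, Q b * f b| ≤ (∑ b, |P b - Q b|) / 2 := by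
  -- centring `f` at `1/2` costs nothing because `P` and `Q` have the same mass
  have hcentre : ∑ b, P b * f b - ∑ b, Q b * f b = ∑ b, (P b - Q b) * (f b - 1 / 2) := by
    simp only [sub_mul, mul_sub, Finset.sum_sub_distrib, ← Finset.sum_mul, hPQ]
    ring
  rw [hcentre, Finset.sum_div]
  refine (Finset.abs_sum_le_sum_abs _ _).trans (Finset.sum_le_sum fun b _ => ?_)
  rw [abs_mul, div_eq_mul_one_div]
  refine mul_le_mul_of_nonneg_left ?_ (abs_nonneg _)
  rw [abs_le]
  constructor <;> linarith [(hf b).1, (hf b).2]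

lemma abs_sum_mul_sub_sum_mul_le_sqrt_Jdiv {P Q f : α → ℝ} (hP : ∀ b, 0 < P b)
    (hQ : ∀ b, 0 < Q b) (hPs : ∑ b, P b = 1) (hQs : ∑ b, Q b = 1)
    (hf : ∀ b, f b ∈ Set.Icc (0 : ℝ) 1) :
    |∑ b, P b * f b - ∑ b, Q b * f b| ≤ Real.sqrt (Jdiv P Q) := by
  have hL := sq_sum_abs_sub_le_two_mul_Jdiv hP hQ hPs hQs
  have hE := abs_sum_mul_sub_sum_mul_le_half_sum_abs_sub (hPs.trans hQs.symm) hf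
  refine Real.abs_le_sqrt ?_
  calc (∑ b, P b * f b - ∑ b, Q b * f b) ^ 2
      = |∑ b, P b * f b - ∑ b, Q b * f b| ^ 2 := (sq_abs _).symm
    _ ≤ ((∑ b, |P b - Q b|) / 2) ^ 2 := pow_le_pow_left₀ (abs_nonneg _) hE 2
    _ ≤ Jdiv P Q := by nlinarith [sq_nonneg (∑ b, |P b - Q b|)]

end Divergence

section ProductPolicy

variable {N : ℕ} {A : Type*} [Fintype A]

lemma jointPmf_pos {π : Fin N → A → ℝ} (hπ : ∀ j x, 0 < π j x) (b : Fin N → A) :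
    0 < jointPmf π b :=
  Finset.prod_pos fun j _ => hπ j (b j)

lemma sum_jointPmf {π : Fin N → A → ℝ} (hπ : ∀ j, ∑ x, π j x = 1) :
    ∑ b, jointPmf π b = 1 := by
  simp [jointPmf, ← Fintype.prod_sum, hπ]

lemma sum_jointPmf_mul_eq_sum_funSplitAt (π : Fin N → A → ℝ) (i : Fin N)
    (F : (Fin N → A) → ℝ) :
    ∑ b, jointPmf π b * F b = ∑ x, π i x * ∑ g : {j // j ≠ i} → A,
      (∏ j : {j // j ≠ i}, π j (g j)) * F ((Equiv.funSplitAt i A).symm (x, g)) := by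
  rw [← (Equiv.funSplitAt i A).symm.sum_comp, Fintype.sum_prod_type]
  refine Finset.sum_congr rfl fun x _ => ?_
  rw [Finset.mul_sum]
  refine Finset.sum_congr rfl fun g _ => ?_
  have hcoord : ∀ j : {j // j ≠ i}, (Equiv.funSplitAt i A).symm (x, g) j = g j := fun j => by
    simp [j.2]
  simp only [jointPmf, Fintype.prod_eq_mul_prod_subtype_ne _ i, hcoord]
  simp [mul_assoc]

variable [DecidableEq A]

lemma margU_eq_expVal {π : Fin N → A → ℝ} (hπ : ∀ j, ∑ x, π j x = 1)
    (u : Fin N → (Fin N → A) → ℝ) (i : Fin N) (a : A) :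
    margU u π i a = expVal π (fun b => u i (Function.update b i a)) := by
  have hupdate : ∀ x (g : {j // j ≠ i} → A),
      Function.update ((Equiv.funSplitAt i A).symm (x, g)) i a
        = (Equiv.funSplitAt i A).symm (a, g) := fun x g => by
    ext j
    by_cases hj : j = i
    · subst hj; simp
    · simp [hj]
  have hother : ∀ j : {j // j ≠ i}, Function.update π i (pmfOf a) j = π j :=
    fun j => Function.update_of_ne j.2 _ _
  rw [margU, expVal, expVal, sum_jointPmf_mul_eq_sum_funSplitAt _ i,
    sum_jointPmf_mul_eq_sum_funSplitAt _ i]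
  simp [hother, hupdate, ← Finset.sum_mul, hπ, pmfOf]

lemma abs_margU_sub_le_sqrt_Jdiv {u : Fin N → (Fin N → A) → ℝ} {i : Fin N}
    (hu : ∀ b, 0 ≤ u i b ∧ u i b ≤ 1)
    {p q : Fin N → A → ℝ} (hp : ∀ j x, 0 < p j x) (hq : ∀ j x, 0 < q j x)
    (hps : ∀ j, ∑ x, p j x = 1) (hqs : ∀ j, ∑ x, q j x = 1) (a : A) :
    |margU u p i a - margU u q i a| ≤ Real.sqrt (Jdiv (jointPmf p) (jointPmf q)) := by
  rw [margU_eq_expVal hps, margU_eq_expVal hqs]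
  exact abs_sum_mul_sub_sum_mul_le_sqrt_Jdiv (jointPmf_pos hp) (jointPmf_pos hq)
    (sum_jointPmf hps) (sum_jointPmf hqs) fun b => hu _

end ProductPolicy

lemma NPGstep.pos_and_sum_eq_one {N : ℕ} {A : Type*} [Fintype A] [DecidableEq A] [Nonempty A]
    {u : Fin N → (Fin N → A) → ℝ} {τ η : ℝ} {π : ℕ → Fin N → A → ℝ} (hstep : NPGstep u τ η π)
    (hpos : ∀ j x, 0 < π 0 j x) (hsum : ∀ j, ∑ x, π 0 j x = 1) (t : ℕ) :
    (∀ j x, 0 < π t j x) ∧ ∀ j, ∑ x, π t j x = 1 := by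
  induction t with
  | zero => exact ⟨hpos, hsum⟩
  | succ t ih =>
    have hweight : ∀ j x, 0 < π t j x ^ (1 - η * τ) * Real.exp (η * margU u (π t) j x) :=
      fun j x => mul_pos (Real.rpow_pos_of_pos (ih.1 j x) _) (Real.exp_pos _)
    have hZ : ∀ j, 0 < ∑ x, π t j x ^ (1 - η * τ) * Real.exp (η * margU u (π t) j x) :=
      fun j => Finset.sum_pos (fun x _ => hweight j x) Finset.univ_nonempty
    refine ⟨fun j x => ?_, fun j => ?_⟩
    · rw [hstep t j x]
      exact div_pos (hweight j x) (hZ j)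
    · simp_rw [hstep t j, ← Finset.sum_div]
      exact div_self (hZ j).ne'

lemma abs_log_rpow_mul_exp_sub_le {x r r' τ η : ℝ} (hx : 0 < x) (hτ : 0 < τ) (hητ : η * τ ≤ 1) :
    |Real.log (x ^ (1 - η * τ) * Real.exp (η * r)) - r' / τ|
      ≤ (1 - η * τ) * |Real.log x - r / τ| + τ⁻¹ * |r - r'| := by
  have hlog : Real.log (x ^ (1 - η * τ) * Real.exp (η * r)) - r' / τ
      = (1 - η * τ) * (Real.log x - r / τ) + τ⁻¹ * (r - r') := by
    rw [Real.log_mul (Real.rpow_pos_of_pos hx _).ne' (Real.exp_ne_zero _), Real.log_rpow hx,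
      Real.log_exp]
    field_simp
    ring
  rw [hlog]
  refine (abs_add_le _ _).trans_eq ?_
  rw [abs_mul, abs_mul, abs_of_nonneg (sub_nonneg.mpr hητ), abs_of_pos (inv_pos.mpr hτ)]

lemma ciSup_le_mul_ciSup_add {ι : Type*} [Finite ι] [Nonempty ι] {f g : ι → ℝ} {c d : ℝ}
    (hc : 0 ≤ c) (h : ∀ a, f a ≤ c * g a + d) : (⨆ a, f a) ≤ c * (⨆ a, g a) + d :=
  ciSup_le fun a => (h a).trans
    (add_le_add_left (mul_le_mul_of_nonneg_left (le_ciSup (Set.finite_range g).bddAbove a) hc) d)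

lemma le_pow_mul_add_sum_of_le_mul_add {e d : ℕ → ℝ} {c : ℝ} (hc : 0 ≤ c)
    (h : ∀ t, e (t + 1) ≤ c * e t + d t) (t : ℕ) :
    e (t + 1) ≤ c ^ (t + 1) * e 0 + ∑ s ∈ Finset.range (t + 1), c ^ (t - s) * d s := by
  induction t with
  | zero => simpa using h 0
  | succ t ih =>
    have hsum : ∑ s ∈ Finset.range (t + 2), c ^ (t + 1 - s) * d s
        = c * ∑ s ∈ Finset.range (t + 1), c ^ (t - s) * d s + d (t + 1) := by
      rw [Finset.sum_range_succ, Nat.sub_self, pow_zero, one_mul, Finset.mul_sum]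
      congr 1
      refine Finset.sum_congr rfl fun s hs => ?_
      rw [Nat.sub_add_comm (Finset.mem_range_succ_iff.mp hs), pow_succ]
      ring
    rw [hsum]
    calc e (t + 2) ≤ c * e (t + 1) + d (t + 1) := h (t + 1)
      _ ≤ c * (c ^ (t + 1) * e 0 + ∑ s ∈ Finset.range (t + 1), c ^ (t - s) * d s)
          + d (t + 1) := by linarith [mul_le_mul_of_nonneg_left ih hc]
      _ = _ := by ring

theorem aux_sequence_bound_general
    {N : ℕ} {A : Type*} [Fintype A] [DecidableEq A] [Nonempty A]
    (u : Fin N → (Fin N → A) → ℝ) (hu : ∀ i a, 0 ≤ u i a ∧ u i a ≤ 1)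
    (τ η : ℝ) (hτ : 0 < τ) (hητ : η * τ ≤ 1)
    (π : ℕ → Fin N → A → ℝ)
    (hdist : ∀ i, IsDist (π 0 i)) (hpos : ∀ i a, 0 < π 0 i a)
    (hstep : NPGstep u τ η π)
    (ξ : ℕ → Fin N → A → ℝ)
    (hξ0 : ∀ i a, ξ 0 i a =
      (∑ a', Real.exp (margU u (π 0) i a' / τ)) * π 0 i a)
    (hξ : ∀ t i a, ξ (t + 1) i a =
      ξ t i a ^ (1 - η * τ) * Real.exp (η * margU u (π t) i a)) :
    ∀ (i : Fin N) (t : ℕ),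
      (⨆ a : A, |Real.log (ξ (t + 1) i a) - margU u (π (t + 1)) i a / τ|) ≤
        (1 - η * τ) ^ (t + 1) *
            (⨆ a : A, |Real.log (ξ 0 i a) - margU u (π 0) i a / τ|) +
          τ⁻¹ * ∑ s ∈ Finset.range (t + 1), (1 - η * τ) ^ (t - s) *
            Real.sqrt (Jdiv (jointPmf (π (s + 1))) (jointPmf (π s))) := by
  intro i t
  have hπ := hstep.pos_and_sum_eq_one hpos fun j => (hdist j).2
  have hξpos : ∀ t a, 0 < ξ t i a := by
    intro t
    induction t with
    | zero =>
      intro a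
      rw [hξ0]
      exact mul_pos (Finset.sum_pos (fun _ _ => Real.exp_pos _) Finset.univ_nonempty) (hpos i a)
    | succ t ih =>
      intro a
      rw [hξ]
      exact mul_pos (Real.rpow_pos_of_pos (ih a) _) (Real.exp_pos _)
  have hcontract : ∀ t, (⨆ a, |Real.log (ξ (t + 1) i a) - margU u (π (t + 1)) i a / τ|)
      ≤ (1 - η * τ) * (⨆ a, |Real.log (ξ t i a) - margU u (π t) i a / τ|)
        + τ⁻¹ * Real.sqrt (Jdiv (jointPmf (π (t + 1))) (jointPmf (π t))) := fun t =>
    ciSup_le_mul_ciSup_add (sub_nonneg.mpr hητ) fun a => by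
      rw [hξ]
      refine (abs_log_rpow_mul_exp_sub_le (hξpos t a) hτ hητ).trans ?_
      gcongr
      exact (abs_sub_comm _ _).trans_le <|
        abs_margU_sub_le_sqrt_Jdiv (hu i) (hπ _).1 (hπ _).1 (hπ _).2 (hπ _).2 a
  rw [Finset.mul_sum]
  simpa only [mul_left_comm τ⁻¹] using le_pow_mul_add_sum_of_le_mul_add
    (e := fun t => ⨆ a, |Real.log (ξ t i a) - margU u (π t) i a / τ|) (sub_nonneg.mpr hητ) hcontract t

/-- Recursion bound for the auxiliary sequence `ξ`. -/
theorem aux_sequence_bound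
    {N : ℕ} (hN : 0 < N) {A : Type*} [Fintype A] [DecidableEq A] [Nonempty A]
    (u : Fin N → (Fin N → A) → ℝ) (hu : ∀ i a, 0 ≤ u i a ∧ u i a ≤ 1)
    (τ η : ℝ) (hτ : 0 < τ) (hη : 0 < η) (hητ : η * τ ≤ 1)
    (π : ℕ → Fin N → A → ℝ)
    (hdist : ∀ i, IsDist (π 0 i)) (hpos : ∀ i a, 0 < π 0 i a)
    (hstep : NPGstep u τ η π)
    (ξ : ℕ → Fin N → A → ℝ)
    (hξ0 : ∀ i a, ξ 0 i a =
      (∑ a', Real.exp (margU u (π 0) i a' / τ)) * π 0 i a)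
    (hξ : ∀ t i a, ξ (t + 1) i a =
      ξ t i a ^ (1 - η * τ) * Real.exp (η * margU u (π t) i a)) :
    ∀ (i : Fin N) (t : ℕ),
      (⨆ a : A, |Real.log (ξ (t + 1) i a) - margU u (π (t + 1)) i a / τ|) ≤
        (1 - η * τ) ^ (t + 1) *
            (⨆ a : A, |Real.log (ξ 0 i a) - margU u (π 0) i a / τ|) +
          τ⁻¹ * ∑ s ∈ Finset.range (t + 1), (1 - η * τ) ^ (t - s) *
            Real.sqrt (Jdiv (jointPmf (π (s + 1))) (jointPmf (π s))) :=
  aux_sequence_bound_general u hu τ η hτ hητ π hdist hpos hstep ξ hξ0 hξ
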